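/- Assume λ₂(L) > 0 (the empirical graph is connected) and λ̄_min > 0 (the average (1/n) Σᵢ Q⁽ⁱ⁾ of the local matrices is non-singular). Then the matrix Q = diag(Q⁽¹⁾,…,Q⁽ⁿ⁾) + α (L ⊗ I_d) is invertible and its smallest eigenvalue satisfies λ₁(Q) ≥ (1/(1+ρ²)) · min{ λ₂(L) · α · ρ², λ̄_min/2 }, where ρ = λ̄_min/(4 λ_max). -/

import Mathlib

open Matrix Finset
open scoped Kronecker

noncomputable section

/-- The Laplacian matrix of the empirical graph with edge-weight matrix `A`. -/
def lap {n : ℕ} (A : Matrix (Fin n) (Fin n) ℝ) : Matrix (Fin n) (Fin n) ℝ :=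
  Matrix.of fun i j => if i = j then ∑ k ∈ Finset.univ.erase i, A i k else -A i j

/-- The eigenvalues of a real symmetric matrix, in arbitrary order
(junk value `0` if the matrix is not symmetric). -/
def matEigs {ι : Type*} [Fintype ι] [DecidableEq ι] (M : Matrix ι ι ℝ) : ι → ℝ :=
  @dite _ M.IsHermitian (Classical.dec _) (fun h => h.eigenvalues) (fun _ => 0)

/-- The smallest eigenvalue of a real symmetric matrix. -/
def lamMin {ι : Type*} [Fintype ι] [DecidableEq ι] (M : Matrix ι ι ℝ) : ℝ :=
  ⨅ k, matEigs M k

/-- The largest eigenvalue of a real symmetric matrix. -/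
def lamMax {ι : Type*} [Fintype ι] [DecidableEq ι] (M : Matrix ι ι ℝ) : ℝ :=
  ⨆ k, matEigs M k

/-- The eigenvalues of a real symmetric matrix, sorted in ascending order. -/
def sortedEigs {ι : Type*} [Fintype ι] [DecidableEq ι] (M : Matrix ι ι ℝ) :
    Fin (Fintype.card ι) → ℝ := fun k =>
  matEigs (Matrix.reindex (Fintype.equivFin ι) (Fintype.equivFin ι) M)
    (Tuple.sort (matEigs (Matrix.reindex (Fintype.equivFin ι) (Fintype.equivFin ι) M)) k)

/-- The second-smallest eigenvalue `λ₂` of a real symmetric matrix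
(junk value `0` for matrices of size `< 2`). -/
def eigTwo {ι : Type*} [Fintype ι] [DecidableEq ι] (M : Matrix ι ι ℝ) : ℝ :=
  if h : 1 < Fintype.card ι then sortedEigs M ⟨1, h⟩ else 0

/-- The GTVMin objective for local linear models: the sum of the local average squared-error
losses plus `α` times the GTV, the latter being a sum over unordered pairs of nodes. -/
def gtvObj {n d : ℕ} (A : Matrix (Fin n) (Fin n) ℝ) (m : Fin n → ℕ)
    (X : (i : Fin n) → Matrix (Fin (m i)) (Fin d) ℝ)
    (y : (i : Fin n) → EuclideanSpace ℝ (Fin (m i)))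
    (α : ℝ) (w : Fin n → EuclideanSpace ℝ (Fin d)) : ℝ :=
  (∑ i, (1 / (m i : ℝ)) * ‖y i - Matrix.toEuclideanLin (X i) (w i)‖ ^ 2) +
    α * ∑ p ∈ Finset.univ.filter (fun p : Fin n × Fin n => p.1 < p.2),
      A p.1 p.2 * ‖w p.1 - w p.2‖ ^ 2

/-- The block-diagonal matrix `diag(Q⁽¹⁾,…,Q⁽ⁿ⁾)`. -/
def blockDiag {n d : ℕ} (Qb : Fin n → Matrix (Fin d) (Fin d) ℝ) :
    Matrix (Fin n × Fin d) (Fin n × Fin d) ℝ :=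
  Matrix.of fun p q => if p.1 = q.1 then Qb p.1 p.2 q.2 else 0

/-!
Write `x = (x⁽¹⁾, …, x⁽ⁿ⁾)` blockwise and split each block as `x⁽ⁱ⁾ = c + u⁽ⁱ⁾`, where `c` is the
mean of the blocks, so that `‖x‖² = n‖c‖² + Σ‖u⁽ⁱ⁾‖²`. Column by column the Laplacian term only
sees the deviations `u⁽ⁱ⁾`: `L 1 = 0` and all other eigenvalues of `L` are at least `λ₂(L)`, so
it is at least `α λ₂(L) Σ‖u⁽ⁱ⁾‖²`. The local terms are nonnegative and at least
`λ̄_min n‖c‖² - 2 λ_max √n ‖c‖ (Σ‖u⁽ⁱ⁾‖²)^(1/2)`. When the deviations are small compared to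
`ρ √n ‖c‖` the local terms alone give `(λ̄_min / 2) n‖c‖²`; otherwise the Laplacian term dominates.
Either way `xᵀ Q x ≥ c₀ ‖x‖²` with the stated constant `c₀ > 0`, which bounds every eigenvalue of
`Q` from below.
-/

namespace Matrix.IsHermitian

variable {ι : Type*} [Fintype ι] [DecidableEq ι] {M : Matrix ι ι ℝ} (hM : M.IsHermitian)

def eigenCoord (x : ι → ℝ) (j : ι) : ℝ := (hM.eigenvectorBasis j : ι → ℝ) ⬝ᵥ x

lemma dotProduct_eq_sum_eigenCoord (x y : ι → ℝ) :
    x ⬝ᵥ y = ∑ j, hM.eigenCoord x j * hM.eigenCoord y j := by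
  have := hM.eigenvectorBasis.sum_inner_mul_inner (WithLp.toLp 2 x) (WithLp.toLp 2 y)
  simp only [EuclideanSpace.inner_eq_star_dotProduct, star_trivial] at this
  rw [dotProduct_comm, ← this]
  exact sum_congr rfl fun j _ => by rw [dotProduct_comm y, eigenCoord, eigenCoord]

lemma eigenCoord_mulVec (y : ι → ℝ) (j : ι) :
    hM.eigenCoord (M *ᵥ y) j = hM.eigenvalues j * hM.eigenCoord y j := by
  rw [eigenCoord, dotProduct_mulVec, ← mulVec_transpose, ← conjTranspose_eq_transpose_of_trivial,
    hM.eq, hM.mulVec_eigenvectorBasis, smul_dotProduct]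
  rfl

lemma dotProduct_mulVec_eq_sum (x y : ι → ℝ) :
    x ⬝ᵥ M *ᵥ y = ∑ j, hM.eigenvalues j * (hM.eigenCoord x j * hM.eigenCoord y j) := by
  rw [dotProduct_eq_sum_eigenCoord hM]
  exact sum_congr rfl fun j _ => by rw [eigenCoord_mulVec]; ring

lemma eigenvectorBasis_dotProduct_self (j : ι) :
    (hM.eigenvectorBasis j : ι → ℝ) ⬝ᵥ (hM.eigenvectorBasis j : ι → ℝ) = 1 := by
  have h : inner ℝ (hM.eigenvectorBasis j) (hM.eigenvectorBasis j) = 1 := by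
    rw [real_inner_self_eq_norm_sq, hM.eigenvectorBasis.orthonormal.1 j, one_pow]
  rwa [EuclideanSpace.inner_eq_star_dotProduct, star_trivial] at h

lemma eigenvectorBasis_dotProduct_mulVec (j : ι) :
    (hM.eigenvectorBasis j : ι → ℝ) ⬝ᵥ M *ᵥ (hM.eigenvectorBasis j : ι → ℝ) = hM.eigenvalues j := by
  rw [hM.mulVec_eigenvectorBasis, dotProduct_smul, eigenvectorBasis_dotProduct_self, smul_eq_mul,
    mul_one]

lemma dotProduct_mulVec_comm (hM : M.IsHermitian) (x y : ι → ℝ) :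
    x ⬝ᵥ M *ᵥ y = y ⬝ᵥ M *ᵥ x := by
  simp only [hM.dotProduct_mulVec_eq_sum, mul_comm (hM.eigenCoord x _)]

lemma mul_dotProduct_self_le_of_le_eigenvalues {c : ℝ} (hc : ∀ j, c ≤ hM.eigenvalues j)
    (x : ι → ℝ) : c * (x ⬝ᵥ x) ≤ x ⬝ᵥ M *ᵥ x := by
  rw [hM.dotProduct_mulVec_eq_sum, hM.dotProduct_eq_sum_eigenCoord, mul_sum]
  exact sum_le_sum fun j _ =>
    mul_le_mul_of_nonneg_right (hc j) (mul_self_nonneg _)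

lemma dotProduct_mulVec_le_of_eigenvalues_le {C : ℝ} (hC : ∀ j, hM.eigenvalues j ≤ C)
    (x : ι → ℝ) : x ⬝ᵥ M *ᵥ x ≤ C * (x ⬝ᵥ x) := by
  rw [hM.dotProduct_mulVec_eq_sum, hM.dotProduct_eq_sum_eigenCoord, mul_sum]
  exact sum_le_sum fun j _ =>
    mul_le_mul_of_nonneg_right (hC j) (mul_self_nonneg _)

lemma le_eigenvalues_of_mul_dotProduct_self_le {c : ℝ}
    (hc : ∀ x : ι → ℝ, c * (x ⬝ᵥ x) ≤ x ⬝ᵥ M *ᵥ x) (j : ι) : c ≤ hM.eigenvalues j := by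
  simpa [eigenvectorBasis_dotProduct_self, eigenvectorBasis_dotProduct_mulVec] using
    hc (hM.eigenvectorBasis j)

lemma abs_dotProduct_mulVec_le [Nonempty ι] {C : ℝ} (hC : ∀ j, |hM.eigenvalues j| ≤ C)
    (x y : ι → ℝ) : |x ⬝ᵥ M *ᵥ y| ≤ C * (√(x ⬝ᵥ x) * √(y ⬝ᵥ y)) := by
  have hC0 : 0 ≤ C := (abs_nonneg _).trans (hC (Classical.arbitrary ι))
  have hsq (z : ι → ℝ) : ∑ j, |hM.eigenCoord z j| ^ 2 = z ⬝ᵥ z := by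
    rw [hM.dotProduct_eq_sum_eigenCoord z z]
    exact sum_congr rfl fun j _ => by rw [sq_abs, sq]
  calc |x ⬝ᵥ M *ᵥ y|
      ≤ ∑ j, |hM.eigenvalues j| * (|hM.eigenCoord x j| * |hM.eigenCoord y j|) := by
        rw [hM.dotProduct_mulVec_eq_sum]
        exact (abs_sum_le_sum_abs _ _).trans_eq (by simp only [abs_mul])
    _ ≤ C * ∑ j, |hM.eigenCoord x j| * |hM.eigenCoord y j| := by
        rw [mul_sum]
        gcongr with j
        exact hC j
    _ ≤ C * (√(x ⬝ᵥ x) * √(y ⬝ᵥ y)) := by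
        rw [← hsq x, ← hsq y]
        gcongr
        exact Real.sum_mul_le_sqrt_mul_sqrt _ _ _

end Matrix.IsHermitian

section ExtremeEigenvalues

variable {ι : Type*} [Fintype ι] [DecidableEq ι] {M : Matrix ι ι ℝ}

lemma matEigs_of_isHermitian (hM : M.IsHermitian) : matEigs M = hM.eigenvalues :=
  dif_pos hM

lemma lamMin_le_eigenvalues (hM : M.IsHermitian) (j : ι) : lamMin M ≤ hM.eigenvalues j := by
  rw [lamMin, matEigs_of_isHermitian hM]
  exact ciInf_le (Finite.bddBelow_range _) j

lemma eigenvalues_le_lamMax (hM : M.IsHermitian) (j : ι) : hM.eigenvalues j ≤ lamMax M := by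
  rw [lamMax, matEigs_of_isHermitian hM]
  exact le_ciSup (Finite.bddAbove_range _) j

lemma lamMin_mul_dotProduct_self_le (hM : M.IsHermitian) (x : ι → ℝ) :
    lamMin M * (x ⬝ᵥ x) ≤ x ⬝ᵥ M *ᵥ x :=
  hM.mul_dotProduct_self_le_of_le_eigenvalues (lamMin_le_eigenvalues hM) x

lemma le_lamMin_of_mul_dotProduct_self_le [Nonempty ι] (hM : M.IsHermitian) {c : ℝ}
    (hc : ∀ x : ι → ℝ, c * (x ⬝ᵥ x) ≤ x ⬝ᵥ M *ᵥ x) : c ≤ lamMin M := by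
  rw [lamMin, matEigs_of_isHermitian hM]
  exact le_ciInf (hM.le_eigenvalues_of_mul_dotProduct_self_le hc)

lemma isUnit_det_of_mul_dotProduct_self_le (hM : M.IsHermitian) {c : ℝ} (hc : 0 < c)
    (h : ∀ x : ι → ℝ, c * (x ⬝ᵥ x) ≤ x ⬝ᵥ M *ᵥ x) : IsUnit M.det := by
  refine isUnit_iff_ne_zero.mpr (PosDef.det_pos (PosDef.of_dotProduct_mulVec_pos hM
    fun x hx => ?_)).ne'
  have hxx : 0 < x ⬝ᵥ x :=
    (dotProduct_star_self_nonneg x).lt_of_ne' (by simpa using hx)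
  simpa using (mul_pos hc hxx).trans_le (h x)

lemma lamMin_of_isEmpty [IsEmpty ι] (M : Matrix ι ι ℝ) : lamMin M = 0 :=
  Real.iInf_of_isEmpty _

end ExtremeEigenvalues

lemma Tuple.apply_sort_one_le {α : Type*} [LinearOrder α] {N : ℕ} (g : Fin N → α) (hN : 1 < N)
    {j : Fin N} (hj : j ≠ Tuple.sort g ⟨0, by omega⟩) : g (Tuple.sort g ⟨1, hN⟩) ≤ g j := by
  have hpos : (⟨1, hN⟩ : Fin N) ≤ (Tuple.sort g).symm j := by
    refine Fin.le_def.mpr (Nat.one_le_iff_ne_zero.mpr fun h0 => hj ?_)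
    rw [← (Tuple.sort g).apply_symm_apply j]
    exact congrArg _ (Fin.ext h0)
  simpa using Tuple.monotone_sort g hpos

section SpectralGap

variable {ι : Type*} [Fintype ι] [DecidableEq ι] {M : Matrix ι ι ℝ}

/-- A kernel vector `v` must lie along the eigenvector `j₀`, the only one whose eigenvalue may
be below `s`, so `(v ⬝ᵥ y)² / (v ⬝ᵥ v)` is the squared `j₀`-coordinate of `y`. -/
lemma Matrix.IsHermitian.mul_sub_le_dotProduct_mulVec_of_mulVec_eq_zero (hM : M.IsHermitian)
    {j₀ : ι} {s : ℝ} (hs : 0 < s) (hgap : ∀ j ≠ j₀, s ≤ hM.eigenvalues j) {v : ι → ℝ}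
    (hv : M *ᵥ v = 0) (hv0 : v ≠ 0) (y : ι → ℝ) :
    s * (y ⬝ᵥ y - (v ⬝ᵥ y) ^ 2 / (v ⬝ᵥ v)) ≤ y ⬝ᵥ M *ᵥ y := by
  set r := hM.eigenCoord v
  set c := hM.eigenCoord y
  have hker (j : ι) : hM.eigenvalues j * r j = 0 := by
    rw [← hM.eigenCoord_mulVec, hv, eigenCoord, dotProduct_zero]
  have hr (j : ι) (hj : j ≠ j₀) : r j = 0 :=
    (mul_eq_zero.mp (hker j)).resolve_left (hs.trans_le (hgap j hj)).ne'
  have hsum (z : ι → ℝ) : ∑ j, r j * z j = r j₀ * z j₀ :=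
    sum_eq_single j₀ (fun j _ hj => by rw [hr j hj, zero_mul]) (by simp)
  have hvv : v ⬝ᵥ v = r j₀ ^ 2 := by rw [hM.dotProduct_eq_sum_eigenCoord, hsum, sq]
  have hvy : v ⬝ᵥ y = r j₀ * c j₀ := by rw [hM.dotProduct_eq_sum_eigenCoord, hsum]
  have hr₀ : r j₀ ≠ 0 := fun h => hv0 (dotProduct_self_eq_zero.mp (by rw [hvv, h, sq, zero_mul]))
  have heig₀ : hM.eigenvalues j₀ = 0 := (mul_eq_zero.mp (hker j₀)).resolve_right hr₀
  have hproj : (v ⬝ᵥ y) ^ 2 / (v ⬝ᵥ v) = c j₀ * c j₀ := by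
    rw [hvv, hvy]; field_simp
  have hyy : y ⬝ᵥ y - c j₀ * c j₀ = ∑ j ∈ univ.erase j₀, c j * c j := by
    rw [hM.dotProduct_eq_sum_eigenCoord, ← add_sum_erase _ _ (mem_univ j₀),
      add_sub_cancel_left]
  have hyMy : y ⬝ᵥ M *ᵥ y = ∑ j ∈ univ.erase j₀, hM.eigenvalues j * (c j * c j) := by
    rw [hM.dotProduct_mulVec_eq_sum, ← add_sum_erase _ _ (mem_univ j₀), heig₀, zero_mul,
      zero_add]
  rw [hproj, hyy, hyMy, mul_sum]
  exact sum_le_sum fun j hj =>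
    mul_le_mul_of_nonneg_right (hgap j (ne_of_mem_erase hj)) (mul_self_nonneg _)

lemma one_lt_card_of_eigTwo_pos (h : 0 < eigTwo M) : 1 < Fintype.card ι := by
  by_contra hc
  rw [eigTwo, dif_neg hc] at h
  exact h.false

/-- `eigTwo` sorts the eigenvalues of `M` reindexed along `Fintype.equivFin ι`, so the argument
runs for that reindexed matrix and is transported back. -/
lemma Matrix.IsHermitian.eigTwo_mul_sub_le_dotProduct_mulVec (hM : M.IsHermitian)
    (h2 : 0 < eigTwo M) {v : ι → ℝ} (hv : M *ᵥ v = 0) (hv0 : v ≠ 0) (y : ι → ℝ) :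
    eigTwo M * (y ⬝ᵥ y - (v ⬝ᵥ y) ^ 2 / (v ⬝ᵥ v)) ≤ y ⬝ᵥ M *ᵥ y := by
  have hN := one_lt_card_of_eigTwo_pos h2
  set e := Fintype.equivFin ι
  have hM' : (Matrix.reindex e e M).IsHermitian := hM.submatrix e.symm
  have hgap (j) (hj : j ≠ Tuple.sort hM'.eigenvalues ⟨0, by omega⟩) :
      eigTwo M ≤ hM'.eigenvalues j := by
    rw [eigTwo, dif_pos hN, sortedEigs, matEigs_of_isHermitian hM']
    exact Tuple.apply_sort_one_le _ hN hj
  have hmulVec (z : ι → ℝ) : Matrix.reindex e e M *ᵥ (z ∘ e.symm) = (M *ᵥ z) ∘ e.symm := by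
    rw [reindex_apply, submatrix_mulVec_equiv, Equiv.symm_symm, Function.comp_assoc,
      e.symm_comp_self, Function.comp_id]
  have hdot (z w : ι → ℝ) : z ∘ e.symm ⬝ᵥ w ∘ e.symm = z ⬝ᵥ w := by
    rw [comp_equiv_symm_dotProduct, Function.comp_assoc, e.symm_comp_self, Function.comp_id]
  have hv' : v ∘ e.symm ≠ 0 := fun h => hv0 (funext fun i => by simpa using congrFun h (e i))
  simpa only [hmulVec, hdot] using
    hM'.mul_sub_le_dotProduct_mulVec_of_mulVec_eq_zero h2 hgap (by rw [hmulVec, hv]; rfl) hv'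
      (y ∘ e.symm)

end SpectralGap

section Laplacian

variable {n : ℕ}

lemma lap_isHermitian {A : Matrix (Fin n) (Fin n) ℝ} (hA : ∀ i j, A i j = A j i) :
    (lap A).IsHermitian := by
  ext i j
  simp only [conjTranspose_apply, star_trivial, lap, of_apply]
  rcases eq_or_ne i j with rfl | hij
  · rfl
  · rw [if_neg hij.symm, if_neg hij, hA]

lemma lap_mulVec_one (A : Matrix (Fin n) (Fin n) ℝ) : lap A *ᵥ 1 = 0 := by
  funext i
  rw [mulVec, dotProduct_one, ← add_sum_erase _ _ (mem_univ i)]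
  simp only [lap, of_apply, if_true]
  rw [sum_congr rfl fun j hj => if_neg (ne_of_mem_erase hj).symm, sum_neg_distrib,
    add_neg_cancel, Pi.zero_apply]

lemma sum_sq_sub_mean (y : Fin n → ℝ) :
    ∑ i, (y i - (∑ j, y j) / n) ^ 2 = y ⬝ᵥ y - (∑ i, y i) ^ 2 / n := by
  rcases Nat.eq_zero_or_pos n with rfl | hn
  · simp
  · have hn' : (n : ℝ) ≠ 0 := by positivity
    simp only [dotProduct, sub_sq, sum_add_distrib, sum_sub_distrib, ← sum_mul, ← mul_sum,
      sum_const, card_univ, Fintype.card_fin, nsmul_eq_mul]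
    field_simp
    ring

lemma eigTwo_lap_mul_sum_sq_sub_mean_le {A : Matrix (Fin n) (Fin n) ℝ}
    (hA : ∀ i j, A i j = A j i) (hconn : 0 < eigTwo (lap A)) (y : Fin n → ℝ) :
    eigTwo (lap A) * ∑ i, (y i - (∑ j, y j) / n) ^ 2 ≤ y ⬝ᵥ lap A *ᵥ y := by
  have : Nonempty (Fin n) :=
    Fintype.card_pos_iff.mp (by have := one_lt_card_of_eigTwo_pos hconn; omega)
  simpa [sum_sq_sub_mean, one_dotProduct, one_dotProduct_one] using
    (lap_isHermitian hA).eigTwo_mul_sub_le_dotProduct_mulVec hconn (lap_mulVec_one A) one_ne_zero y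

end Laplacian

section Blocks

variable {n d : ℕ}

def blockMean (x : Fin n × Fin d → ℝ) : Fin d → ℝ := fun k => (∑ i, x (i, k)) / n

lemma sum_dotProduct_curry_sub_blockMean (x : Fin n × Fin d → ℝ) :
    ∑ i, (Function.curry x i - blockMean x) ⬝ᵥ (Function.curry x i - blockMean x)
      = ∑ k, ∑ i, (x (i, k) - (∑ j, x (j, k)) / n) ^ 2 := by
  simp only [dotProduct, Pi.sub_apply, Function.curry_apply, blockMean, sq]
  exact sum_comm

lemma dotProduct_self_eq_blockMean_add (x : Fin n × Fin d → ℝ) :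
    x ⬝ᵥ x = n * (blockMean x ⬝ᵥ blockMean x)
      + ∑ i, (Function.curry x i - blockMean x) ⬝ᵥ (Function.curry x i - blockMean x) := by
  rw [sum_dotProduct_curry_sub_blockMean, dotProduct, Fintype.sum_prod_type, sum_comm,
    dotProduct, mul_sum, ← sum_add_distrib]
  refine sum_congr rfl fun k _ => ?_
  rw [sum_sq_sub_mean, blockMean]
  rcases Nat.eq_zero_or_pos n with rfl | hn
  · simp
  · simp only [dotProduct]
    field_simp
    ring

lemma dotProduct_blockDiag_mulVec (Qb : Fin n → Matrix (Fin d) (Fin d) ℝ)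
    (x : Fin n × Fin d → ℝ) :
    x ⬝ᵥ _root_.blockDiag Qb *ᵥ x
      = ∑ i, Function.curry x i ⬝ᵥ Qb i *ᵥ Function.curry x i := by
  simp [dotProduct, mulVec, _root_.blockDiag, Fintype.sum_prod_type, ite_mul, sum_ite_irrel]

lemma dotProduct_kronecker_one_mulVec (L : Matrix (Fin n) (Fin n) ℝ) (x : Fin n × Fin d → ℝ) :
    x ⬝ᵥ (L ⊗ₖ (1 : Matrix (Fin d) (Fin d) ℝ)) *ᵥ x
      = ∑ k, (fun i => x (i, k)) ⬝ᵥ L *ᵥ (fun i => x (i, k)) := by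
  simp only [dotProduct, mulVec, kroneckerMap_apply, one_apply, mul_ite, mul_one, mul_zero,
    ite_mul, zero_mul, Fintype.sum_prod_type, sum_ite_eq, mem_univ, if_true]
  rw [sum_comm]

lemma eigTwo_lap_mul_le_dotProduct_kronecker_mulVec {A : Matrix (Fin n) (Fin n) ℝ}
    (hA : ∀ i j, A i j = A j i) (hconn : 0 < eigTwo (lap A)) (x : Fin n × Fin d → ℝ) :
    eigTwo (lap A) *
        ∑ i, (Function.curry x i - blockMean x) ⬝ᵥ (Function.curry x i - blockMean x)
      ≤ x ⬝ᵥ (lap A ⊗ₖ (1 : Matrix (Fin d) (Fin d) ℝ)) *ᵥ x := by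
  rw [sum_dotProduct_curry_sub_blockMean, dotProduct_kronecker_one_mulVec, mul_sum]
  exact sum_le_sum fun k _ => eigTwo_lap_mul_sum_sq_sub_mean_le hA hconn _

end Blocks

section LocalTerms

variable {ι κ : Type*} [Fintype ι] [Fintype κ] [DecidableEq κ] {Qb : ι → Matrix κ κ ℝ}

lemma sum_dotProduct_mulVec_add_ge [Nonempty κ] (hQ : ∀ i, (Qb i).PosSemidef) {lmax : ℝ}
    (hmax : ∀ i j, (hQ i).isHermitian.eigenvalues j ≤ lmax) (c : κ → ℝ) (u : ι → κ → ℝ) :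
    ∑ i, c ⬝ᵥ Qb i *ᵥ c - 2 * lmax * (√(Fintype.card ι * (c ⬝ᵥ c)) * √(∑ i, u i ⬝ᵥ u i))
      ≤ ∑ i, (c + u i) ⬝ᵥ Qb i *ᵥ (c + u i) := by
  rcases isEmpty_or_nonempty ι with hι | hι
  · simp
  have hlmax : 0 ≤ lmax :=
    ((hQ (Classical.arbitrary ι)).eigenvalues_nonneg (Classical.arbitrary κ)).trans (hmax _ _)
  have hexpand (i : ι) : (c + u i) ⬝ᵥ Qb i *ᵥ (c + u i)
      = c ⬝ᵥ Qb i *ᵥ c + 2 * (u i ⬝ᵥ Qb i *ᵥ c) + u i ⬝ᵥ Qb i *ᵥ u i := by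
    rw [mulVec_add, dotProduct_add, add_dotProduct, add_dotProduct,
      (hQ i).isHermitian.dotProduct_mulVec_comm c (u i)]
    ring
  have hcross (i : ι) : -(lmax * (√(u i ⬝ᵥ u i) * √(c ⬝ᵥ c))) ≤ u i ⬝ᵥ Qb i *ᵥ c :=
    neg_le_of_abs_le ((hQ i).isHermitian.abs_dotProduct_mulVec_le
      (fun j => (abs_of_nonneg ((hQ i).eigenvalues_nonneg j)).trans_le (hmax i j)) _ _)
  have hquad (i : ι) : 0 ≤ u i ⬝ᵥ Qb i *ᵥ u i := by
    simpa using (hQ i).dotProduct_mulVec_nonneg (u i)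
  have hcauchy : ∑ i, √(u i ⬝ᵥ u i) ≤ √(Fintype.card ι) * √(∑ i, u i ⬝ᵥ u i) := by
    simpa [mul_comm] using Real.sum_sqrt_mul_sqrt_le univ (f := fun i => u i ⬝ᵥ u i)
      (g := fun _ => 1) (fun i => by simpa using dotProduct_star_self_nonneg (u i))
      (fun _ => zero_le_one)
  have hcross_sum : ∑ i, lmax * (√(u i ⬝ᵥ u i) * √(c ⬝ᵥ c))
      ≤ lmax * (√(Fintype.card ι * (c ⬝ᵥ c)) * √(∑ i, u i ⬝ᵥ u i)) :=
    calc ∑ i, lmax * (√(u i ⬝ᵥ u i) * √(c ⬝ᵥ c)) = lmax * √(c ⬝ᵥ c) * ∑ i, √(u i ⬝ᵥ u i) := by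
          rw [mul_sum]
          exact sum_congr rfl fun i _ => by ring
      _ ≤ lmax * √(c ⬝ᵥ c) * (√(Fintype.card ι) * √(∑ i, u i ⬝ᵥ u i)) := by gcongr
      _ = lmax * (√(Fintype.card ι * (c ⬝ᵥ c)) * √(∑ i, u i ⬝ᵥ u i)) := by
          rw [Real.sqrt_mul (Nat.cast_nonneg _)]
          ring
  have hsum_cross := sum_le_sum fun i (_ : i ∈ univ) => hcross i
  have hsum_quad := sum_nonneg fun i (_ : i ∈ univ) => hquad i
  rw [sum_neg_distrib] at hsum_cross
  simp only [hexpand, sum_add_distrib, ← mul_sum]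
  linarith

end LocalTerms

section Average

variable {n : ℕ} {κ : Type*} [Fintype κ] [DecidableEq κ] {Qb : Fin n → Matrix κ κ ℝ}

lemma lamMin_smul_sum_mul_le (hQ : ∀ i, (Qb i).PosSemidef) (c : κ → ℝ) :
    lamMin ((n : ℝ)⁻¹ • ∑ i, Qb i) * (n * (c ⬝ᵥ c)) ≤ ∑ i, c ⬝ᵥ Qb i *ᵥ c := by
  have hQavg : ((n : ℝ)⁻¹ • ∑ i, Qb i).PosSemidef :=
    (posSemidef_sum univ fun i _ => hQ i).smul (by positivity)
  have h := lamMin_mul_dotProduct_self_le hQavg.isHermitian c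
  rw [smul_mulVec, sum_mulVec, dotProduct_smul, dotProduct_sum, smul_eq_mul] at h
  rcases Nat.eq_zero_or_pos n with rfl | hn
  · simp
  · calc lamMin ((n : ℝ)⁻¹ • ∑ i, Qb i) * (n * (c ⬝ᵥ c))
          = n * (lamMin ((n : ℝ)⁻¹ • ∑ i, Qb i) * (c ⬝ᵥ c)) := by ring
      _ ≤ n * ((n : ℝ)⁻¹ * ∑ i, c ⬝ᵥ Qb i *ᵥ c) := by gcongr
      _ = ∑ i, c ⬝ᵥ Qb i *ᵥ c := by field_simp

lemma lamMin_smul_sum_le [Nonempty κ] (hn : 0 < n) (hQ : ∀ i, (Qb i).PosSemidef) {lmax : ℝ}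
    (hmax : ∀ i j, (hQ i).isHermitian.eigenvalues j ≤ lmax) :
    lamMin ((n : ℝ)⁻¹ • ∑ i, Qb i) ≤ lmax := by
  set e : κ → ℝ := Pi.single (Classical.arbitrary κ) 1
  have he : e ⬝ᵥ e = 1 := by simp [e]
  have hle : ∑ i, e ⬝ᵥ Qb i *ᵥ e ≤ n * lmax :=
    calc ∑ i, e ⬝ᵥ Qb i *ᵥ e ≤ ∑ _i : Fin n, lmax * (e ⬝ᵥ e) := sum_le_sum fun i _ =>
          (hQ i).isHermitian.dotProduct_mulVec_le_of_eigenvalues_le (hmax i) e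
      _ = n * lmax := by simp [he]
  have h := lamMin_smul_sum_mul_le hQ e
  rw [he, mul_one] at h
  have hn' : (0 : ℝ) < n := by exact_mod_cast hn
  nlinarith

end Average

/-- Two regimes: if `b ≤ ρ a`, the first hypothesis alone gives `P ≥ μ a² / 2`; otherwise
`κ b²` dominates. -/
lemma min_mul_sq_add_sq_le {μ lmax κ ρ a b P : ℝ} (hκ : 0 < κ) (hμ : 0 < μ) (hρ : 0 < ρ)
    (hρμ : 4 * lmax * ρ = μ) (ha : 0 ≤ a) (hb : 0 ≤ b)
    (hP : μ * a ^ 2 - 2 * lmax * (a * b) ≤ P) (hP0 : 0 ≤ P) :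
    1 / (1 + ρ ^ 2) * min (κ * ρ ^ 2) (μ / 2) * (a ^ 2 + b ^ 2) ≤ P + κ * b ^ 2 := by
  have hden : 0 < 1 + ρ ^ 2 := by positivity
  rw [one_div_mul_eq_div, div_mul_eq_mul_div, div_le_iff₀ hden]
  have hlmax : 0 < lmax := by nlinarith
  rcases le_or_gt b (ρ * a) with hba | hab
  · have hcross : 2 * lmax * (a * b) ≤ μ / 2 * a ^ 2 := by
      rw [← hρμ]; nlinarith [mul_le_mul_of_nonneg_left hba (mul_nonneg hlmax.le ha)]
    have hPa : μ / 2 * a ^ 2 ≤ P := by linarith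
    calc min (κ * ρ ^ 2) (μ / 2) * (a ^ 2 + b ^ 2)
        ≤ μ / 2 * ((1 + ρ ^ 2) * a ^ 2) := by
          gcongr
          · exact min_le_right _ _
          · nlinarith [mul_self_le_mul_self hb hba]
      _ ≤ (P + κ * b ^ 2) * (1 + ρ ^ 2) := by
          nlinarith [mul_le_mul_of_nonneg_right hPa hden.le, mul_pos hκ hden, sq_nonneg b]
  · calc min (κ * ρ ^ 2) (μ / 2) * (a ^ 2 + b ^ 2)
        ≤ κ * ((ρ * a) ^ 2 + ρ ^ 2 * b ^ 2) := by
          rw [mul_pow, ← mul_add, ← mul_assoc]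
          gcongr
          exact min_le_left _ _
      _ ≤ κ * (b ^ 2 + ρ ^ 2 * b ^ 2) := by
          gcongr
      _ ≤ (P + κ * b ^ 2) * (1 + ρ ^ 2) := by
          nlinarith [mul_nonneg hP0 hden.le]

section GTVMatrix

variable {n d : ℕ}

def gtvMatrix (Qb : Fin n → Matrix (Fin d) (Fin d) ℝ) (A : Matrix (Fin n) (Fin n) ℝ) (α : ℝ) :
    Matrix (Fin n × Fin d) (Fin n × Fin d) ℝ :=
  _root_.blockDiag Qb + α • (lap A ⊗ₖ (1 : Matrix (Fin d) (Fin d) ℝ))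

lemma isHermitian_blockDiag {Qb : Fin n → Matrix (Fin d) (Fin d) ℝ}
    (hQ : ∀ i, (Qb i).IsHermitian) : (_root_.blockDiag Qb).IsHermitian := by
  ext ⟨i, k⟩ ⟨j, l⟩
  simp only [conjTranspose_apply, star_trivial, _root_.blockDiag, of_apply]
  rcases eq_or_ne i j with rfl | hij
  · simpa using (hQ i).apply k l
  · rw [if_neg hij.symm, if_neg hij]

lemma isHermitian_gtvMatrix {Qb : Fin n → Matrix (Fin d) (Fin d) ℝ}
    (hQ : ∀ i, (Qb i).IsHermitian) {A : Matrix (Fin n) (Fin n) ℝ} (hA : ∀ i j, A i j = A j i)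
    (α : ℝ) : (gtvMatrix Qb A α).IsHermitian := by
  refine (isHermitian_blockDiag hQ).add (IsHermitian.smul ?_ (IsSelfAdjoint.all α))
  rw [IsHermitian, conjTranspose_kronecker, (lap_isHermitian hA).eq, conjTranspose_one]

theorem mul_dotProduct_self_le_dotProduct_gtvMatrix_mulVec [Nonempty (Fin d)]
    {A : Matrix (Fin n) (Fin n) ℝ} (hA : ∀ i j, A i j = A j i) (hconn : 0 < eigTwo (lap A))
    {Qb : Fin n → Matrix (Fin d) (Fin d) ℝ} (hQ : ∀ i, (Qb i).PosSemidef) {α lmax lbar ρ : ℝ}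
    (hα : 0 < α) (hmax : ∀ i j, (hQ i).isHermitian.eigenvalues j ≤ lmax)
    (hbar : lbar ≤ lamMin ((n : ℝ)⁻¹ • ∑ i, Qb i)) (hlbar : 0 < lbar) (hρ : 0 < ρ)
    (hρlbar : 4 * lmax * ρ = lbar) (x : Fin n × Fin d → ℝ) :
    1 / (1 + ρ ^ 2) * min (eigTwo (lap A) * α * ρ ^ 2) (lbar / 2) * (x ⬝ᵥ x)
      ≤ x ⬝ᵥ gtvMatrix Qb A α *ᵥ x := by
  set c := blockMean x
  set u : Fin n → Fin d → ℝ := fun i => Function.curry x i - c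
  have hS : 0 ≤ n * (c ⬝ᵥ c) :=
    mul_nonneg (Nat.cast_nonneg _) (by simpa using dotProduct_star_self_nonneg c)
  have hT : 0 ≤ ∑ i, u i ⬝ᵥ u i :=
    sum_nonneg fun i _ => by simpa using dotProduct_star_self_nonneg (u i)
  have hblocks : ∑ i, (c + u i) ⬝ᵥ Qb i *ᵥ (c + u i) = x ⬝ᵥ _root_.blockDiag Qb *ᵥ x := by
    simp [u, dotProduct_blockDiag_mulVec]
  have hlocal := sum_dotProduct_mulVec_add_ge hQ hmax c u
  rw [Fintype.card_fin, hblocks] at hlocal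
  have hmean : lbar * (n * (c ⬝ᵥ c)) ≤ ∑ i, c ⬝ᵥ Qb i *ᵥ c :=
    (mul_le_mul_of_nonneg_right hbar hS).trans (lamMin_smul_sum_mul_le hQ c)
  have hpsd : 0 ≤ x ⬝ᵥ _root_.blockDiag Qb *ᵥ x := by
    rw [dotProduct_blockDiag_mulVec]
    exact sum_nonneg fun i _ => by simpa using (hQ i).dotProduct_mulVec_nonneg _
  have hlap := eigTwo_lap_mul_le_dotProduct_kronecker_mulVec hA hconn x
  have hbound := min_mul_sq_add_sq_le (κ := eigTwo (lap A) * α) (by positivity) hlbar hρ hρlbar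
    (Real.sqrt_nonneg _) (Real.sqrt_nonneg _) (by rw [Real.sq_sqrt hS]; linarith) hpsd
  rw [Real.sq_sqrt hS, Real.sq_sqrt hT, ← dotProduct_self_eq_blockMean_add] at hbound
  rw [gtvMatrix, add_mulVec, dotProduct_add, smul_mulVec, dotProduct_smul, smul_eq_mul]
  nlinarith [mul_le_mul_of_nonneg_left hlap hα.le]

end GTVMatrix

theorem gtvmin_matrix_eigenvalue_lower_bound_general
    {n d : ℕ} (A : Matrix (Fin n) (Fin n) ℝ)
    (hAsymm : ∀ i j, A i j = A j i)
    (m : Fin n → ℕ) (X : (i : Fin n) → Matrix (Fin (m i)) (Fin d) ℝ)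
    (Qb : Fin n → Matrix (Fin d) (Fin d) ℝ)
    (hQb : ∀ i, Qb i = (m i : ℝ)⁻¹ • ((X i)ᵀ * X i))
    (α : ℝ) (hα : 0 < α)
    (Q : Matrix (Fin n × Fin d) (Fin n × Fin d) ℝ)
    (hQ : Q = blockDiag Qb + α • (lap A ⊗ₖ (1 : Matrix (Fin d) (Fin d) ℝ)))
    (lmax lbar ρ : ℝ)
    (hlmax : lmax = ⨆ i, lamMax (Qb i))
    (hlbar : lbar = lamMin ((n : ℝ)⁻¹ • ∑ i, Qb i))
    (hρ : ρ = lbar / (4 * lmax))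
    (hconn : 0 < eigTwo (lap A)) (hlbarpos : 0 < lbar) :
    IsUnit Q.det ∧
      1 / (1 + ρ ^ 2) * min (eigTwo (lap A) * α * ρ ^ 2) (lbar / 2) ≤ lamMin Q := by
  obtain rfl : Q = gtvMatrix Qb A α := hQ
  have hn : 0 < n := by simpa using (one_lt_card_of_eigTwo_pos hconn).trans' one_pos
  have : Nonempty (Fin n) := ⟨⟨0, hn⟩⟩
  have : Nonempty (Fin d) := by
    refine Fin.pos_iff_nonempty.mp (Nat.pos_of_ne_zero fun hd => ?_)
    subst hd
    rw [hlbar, lamMin_of_isEmpty] at hlbarpos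
    exact hlbarpos.false
  have hQpsd (i : Fin n) : (Qb i).PosSemidef := by
    rw [hQb i, ← conjTranspose_eq_transpose_of_trivial]
    exact (posSemidef_conjTranspose_mul_self _).smul (by positivity)
  have hmax (i j) : (hQpsd i).isHermitian.eigenvalues j ≤ lmax := by
    rw [hlmax]
    exact (eigenvalues_le_lamMax _ j).trans
      (le_ciSup (f := fun i => lamMax (Qb i)) (Finite.bddAbove_range _) i)
  have hlmaxpos : 0 < lmax := hlbarpos.trans_le (hlbar ▸ lamMin_smul_sum_le hn hQpsd hmax)
  have hρpos : 0 < ρ := by rw [hρ]; positivity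
  have hbound := mul_dotProduct_self_le_dotProduct_gtvMatrix_mulVec hAsymm hconn hQpsd hα hmax
    hlbar.le hlbarpos hρpos (by rw [hρ]; field_simp)
  have hQh := isHermitian_gtvMatrix (fun i => (hQpsd i).isHermitian) hAsymm α
  have hc : 0 < 1 / (1 + ρ ^ 2) * min (eigTwo (lap A) * α * ρ ^ 2) (lbar / 2) := by positivity
  exact ⟨isUnit_det_of_mul_dotProduct_self_le hQh hc hbound,
    le_lamMin_of_mul_dotProduct_self_le hQh hbound⟩

/-- If `λ₂(L) > 0` and `λ̄_min > 0`, then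
`Q = diag(Q⁽¹⁾,…,Q⁽ⁿ⁾) + α (L ⊗ I_d)` is invertible and
`λ₁(Q) ≥ (1/(1+ρ²)) min{λ₂(L) α ρ², λ̄_min/2}` with `ρ = λ̄_min/(4 λ_max)`. -/
theorem gtvmin_matrix_eigenvalue_lower_bound
    {n d : ℕ} (A : Matrix (Fin n) (Fin n) ℝ)
    (hAsymm : ∀ i j, A i j = A j i) (hAnonneg : ∀ i j, 0 ≤ A i j)
    (hAdiag : ∀ i, A i i = 0)
    (m : Fin n → ℕ) (X : (i : Fin n) → Matrix (Fin (m i)) (Fin d) ℝ)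
    (Qb : Fin n → Matrix (Fin d) (Fin d) ℝ)
    (hQb : ∀ i, Qb i = (m i : ℝ)⁻¹ • ((X i)ᵀ * X i))
    (α : ℝ) (hα : 0 < α)
    (Q : Matrix (Fin n × Fin d) (Fin n × Fin d) ℝ)
    (hQ : Q = blockDiag Qb + α • (lap A ⊗ₖ (1 : Matrix (Fin d) (Fin d) ℝ)))
    (lmax lbar ρ : ℝ)
    (hlmax : lmax = ⨆ i, lamMax (Qb i))
    (hlbar : lbar = lamMin ((n : ℝ)⁻¹ • ∑ i, Qb i))
    (hρ : ρ = lbar / (4 * lmax))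
    (hconn : 0 < eigTwo (lap A)) (hlbarpos : 0 < lbar) :
    IsUnit Q.det ∧
      1 / (1 + ρ ^ 2) * min (eigTwo (lap A) * α * ρ ^ 2) (lbar / 2) ≤ lamMin Q :=
  gtvmin_matrix_eigenvalue_lower_bound_general A hAsymm m X Qb hQb α hα Q hQ lmax lbar ρ hlmax hlbar
    hρ hconn hlbarpos
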